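/- Let (X, E) be a connected coarse space and p a prime. There exists a group coarse structure E′ on the free abelian group A(X) of exponent p on X such that the subspace coarse structure E′|_X equals E. -/

import Mathlib

/-- A coarse structure on `X`. -/
def IsCoarseStructure {X : Type*} (E : Set (Set (X × X))) : Prop :=
  (∀ ε ∈ E, ∀ x : X, (x, x) ∈ ε) ∧
  (∀ ε ∈ E, ∀ δ ∈ E, {p : X × X | ∃ z : X, (p.1, z) ∈ ε ∧ (z, p.2) ∈ δ} ∈ E) ∧
  (∀ ε ∈ E, {p : X × X | (p.2, p.1) ∈ ε} ∈ E) ∧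
  (∀ ε ∈ E, ∀ ε' ⊆ ε, (∀ x : X, (x, x) ∈ ε') → ε' ∈ E)

/-- Connectedness: any two points are related by some entourage. -/
def IsConnectedCoarse {X : Type*} (E : Set (Set (X × X))) : Prop :=
  ∀ x y : X, ∃ ε ∈ E, (x, y) ∈ ε

/-- The `n`-fold sumset of `S` in an additive commutative group. -/
def nSumset {A : Type*} [AddCommGroup A] (S : Set A) (n : ℕ) : Set A :=
  {a | ∃ f : Fin n → A, (∀ i, f i ∈ S) ∧ a = ∑ i, f i}

/-- The set `Y_ε = {x − y : (x, y) ∈ ε}` of differences of generators of the free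
abelian group `A(X) = ⊕_{x ∈ X} ℤ/p` of exponent `p` on `X`. -/
def Yset {X : Type*} (p : ℕ) (ε : Set (X × X)) : Set (X →₀ ZMod p) :=
  {a | ∃ q ∈ ε, a = Finsupp.single q.1 (1 : ZMod p) - Finsupp.single q.2 (1 : ZMod p)}

/-- The coefficient-sum homomorphism `A(X) → ℤ/p`. -/
noncomputable def coeffSum (X : Type*) (p : ℕ) : (X →₀ ZMod p) →+ ZMod p :=
  Finsupp.liftAddHom fun _ : X => AddMonoidHom.id (ZMod p)

/-- A coarse (bornologous) mapping. -/
def IsCoarseMap {X Y : Type*} (EX : Set (Set (X × X))) (EY : Set (Set (Y × Y)))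
    (f : X → Y) : Prop :=
  ∀ ε ∈ EX, ∃ δ ∈ EY, ∀ q ∈ ε, (f q.1, f q.2) ∈ δ

/-- The product coarse structure. -/
def prodCoarse {X Y : Type*} (EX : Set (Set (X × X))) (EY : Set (Set (Y × Y))) :
    Set (Set ((X × Y) × (X × Y))) :=
  {η | (∀ q : X × Y, (q, q) ∈ η) ∧ ∃ ε ∈ EX, ∃ δ ∈ EY,
    η ⊆ {q : (X × Y) × (X × Y) | (q.1.1, q.2.1) ∈ ε ∧ (q.1.2, q.2.2) ∈ δ}}

/-- A group coarse structure on an additive group: addition and negation are coarse. -/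
def IsAddCoarseGroup {A : Type*} [AddGroup A] (E : Set (Set (A × A))) : Prop :=
  IsCoarseMap (prodCoarse E E) E (fun q => q.1 + q.2) ∧
  IsCoarseMap E E (fun a : A => -a)

/-!
Let `E'` consist of the entourages `η` with `a - b ∈ Y_{n,ε}` for all `(a, b) ∈ η`, where
`Y_{n,ε}` is the set of sums of at most `n` differences `x - y` with `(x, y) ∈ ε ∈ E`. These
sets are closed under sums and negation, which makes `E'` a group coarse structure. Its trace
on `X` is `E`: if `x - y` is a sum of `n` differences `a - b` over edges `(a, b) ∈ ε`, pushing
this identity forward to the free module on the connected components of the graph with these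
`n` edges shows that `x` and `y` lie in one component. A path joining them uses each of the `n`
edges at most once, so `(x, y) ∈ (ε ∪ ε⁻¹)ⁿ ∈ E`.
-/

open scoped Pointwise SetRel

namespace IsCoarseStructure

variable {X : Type*} {E : Set (SetRel X X)} {ε δ : SetRel X X}

theorem isRefl (hE : IsCoarseStructure E) (hε : ε ∈ E) : ε.IsRefl :=
  ⟨hE.1 ε hε⟩

theorem comp_mem (hE : IsCoarseStructure E) (hε : ε ∈ E) (hδ : δ ∈ E) : ε ○ δ ∈ E :=
  hE.2.1 ε hε δ hδ

theorem inv_mem (hE : IsCoarseStructure E) (hε : ε ∈ E) : ε.inv ∈ E :=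
  hE.2.2.1 ε hε

theorem of_subset (hE : IsCoarseStructure E) (hε : ε ∈ E) (hδε : δ ⊆ ε) [δ.IsRefl] : δ ∈ E :=
  hE.2.2.2 ε hε δ hδε δ.refl

theorem union_mem (hE : IsCoarseStructure E) (hε : ε ∈ E) (hδ : δ ∈ E) : ε ∪ δ ∈ E := by
  have := hE.isRefl hε
  have := hE.isRefl hδ
  have : (ε ∪ δ).IsRefl := SetRel.isRefl_mono Set.subset_union_left
  exact hE.of_subset (hE.comp_mem hε hδ)
    (Set.union_subset SetRel.left_subset_comp SetRel.right_subset_comp)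

theorem iterate_comp_id_mem (hE : IsCoarseStructure E) (hε : ε ∈ E) (n : ℕ) :
    (ε ○ ·)^[n] SetRel.id ∈ E := by
  induction n with
  | zero =>
    have := hE.isRefl hε
    have : (SetRel.id : SetRel X X).IsRefl := ⟨fun _ => rfl⟩
    exact hE.of_subset (δ := SetRel.id) hε SetRel.id_subset
  | succ n ih =>
    rw [Function.iterate_succ_apply']
    exact hE.comp_mem hε ih

end IsCoarseStructure

theorem SetRel.monotone_iterate_comp_id {X : Type*} (R : SetRel X X) [R.IsRefl] :
    Monotone fun n => (R ○ ·)^[n] SetRel.id :=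
  monotone_nat_of_le_succ fun n => by
    simp only [Function.iterate_succ_apply']
    exact SetRel.right_subset_comp

namespace SimpleGraph

variable {V : Type*} {G : SimpleGraph V}

theorem Walk.mem_iterate_comp {R : SetRel V V} (hR : ∀ ⦃a b⦄, G.Adj a b → (a, b) ∈ R) :
    ∀ {u v : V} (w : G.Walk u v), (u, v) ∈ (R ○ ·)^[w.length] SetRel.id
  | _, _, .nil => rfl
  | _, _, .cons h w => by
    rw [Walk.length_cons, Function.iterate_succ_apply']
    exact ⟨_, hR h, w.mem_iterate_comp hR⟩

theorem Walk.IsTrail.length_le_of_edgeSet_subset_range {ι : Type*} [Fintype ι]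
    {f : ι → Sym2 V} (hG : G.edgeSet ⊆ Set.range f) {u v : V} {w : G.Walk u v}
    (hw : w.IsTrail) : w.length ≤ Fintype.card ι := by
  classical
  calc w.length = w.edges.toFinset.card := by
        rw [List.toFinset_card_of_nodup hw.edges_nodup, Walk.length_edges]
    _ ≤ (Finset.univ.image f).card := Finset.card_le_card fun e he => by
        simpa using hG (w.edges_subset_edgeSet (List.mem_toFinset.mp he))
    _ ≤ Fintype.card ι := Finset.card_image_le

end SimpleGraph

theorem Finsupp.apply_eq_of_single_sub_single_eq_sum {X Y M ι : Type*} [AddCommGroup M]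
    [Fintype ι] {r : M} (hr : r ≠ 0) (c : X → Y) (e : ι → X × X)
    (hc : ∀ i, c (e i).1 = c (e i).2) {x y : X}
    (h : single x r - single y r = ∑ i, (single (e i).1 r - single (e i).2 r)) :
    c x = c y := by
  have hmap := congrArg (mapDomain.addMonoidHom c) h
  simp only [map_sub, map_sum, mapDomain.addMonoidHom_apply, mapDomain_single, hc, sub_self,
    Finset.sum_const_zero, sub_eq_zero] at hmap
  exact single_left_injective hr hmap

section Sumsets

variable {A : Type*} [AddCommGroup A] {S T : Set A} {n m : ℕ}

theorem nSumset_mono (h : S ⊆ T) : nSumset S n ⊆ nSumset T n :=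
  fun _ ⟨f, hf, hsum⟩ => ⟨f, fun i => h (hf i), hsum⟩

theorem nSumset_add_subset : nSumset S n + nSumset S m ⊆ nSumset S (n + m) := by
  rintro _ ⟨a, ⟨f, hf, rfl⟩, b, ⟨g, hg, rfl⟩, rfl⟩
  refine ⟨Fin.append f g, fun i => ?_, by simp [Fin.sum_univ_add]⟩
  refine Fin.addCases (fun i => ?_) (fun i => ?_) i <;> simp [hf, hg]

theorem neg_nSumset_subset : -nSumset S n ⊆ nSumset (-S) n := by
  rintro _ ⟨f, hf, hsum⟩
  exact ⟨-f, fun i => Set.neg_mem_neg.mpr (hf i), by simp [← hsum]⟩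

theorem mem_nSumset_one {a : A} (ha : a ∈ S) : a ∈ nSumset S 1 :=
  ⟨fun _ => a, fun _ => ha, by simp⟩

end Sumsets

section GroupCoarse

variable {A : Type*} [AddCommGroup A]

def subEntourage (B : Set A) : SetRel A A := {q | q.1 - q.2 ∈ B}

@[simp]
theorem mem_subEntourage {B : Set A} {q : A × A} : q ∈ subEntourage B ↔ q.1 - q.2 ∈ B :=
  Iff.rfl

/-- The paper's `E_I`, for `I` the group ideal generated by `𝓑`. -/
def groupCoarseOf (𝓑 : Set (Set A)) : Set (SetRel A A) :=
  {η | η.IsRefl ∧ ∃ B ∈ 𝓑, η ⊆ subEntourage B}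

variable {𝓑 : Set (Set A)}

theorem zero_mem_of_subset_subEntourage {η : SetRel A A} [η.IsRefl] {B : Set A}
    (hηB : η ⊆ subEntourage B) : (0 : A) ∈ B := by
  simpa using hηB (η.rfl (a := 0))

theorem subEntourage_mem_groupCoarseOf {B : Set A} (hB : B ∈ 𝓑) (h0 : (0 : A) ∈ B) :
    subEntourage B ∈ groupCoarseOf 𝓑 :=
  ⟨⟨fun a => by simpa using h0⟩, B, hB, subset_rfl⟩

theorem isCoarseStructure_groupCoarseOf (hadd : ∀ B ∈ 𝓑, ∀ C ∈ 𝓑, ∃ D ∈ 𝓑, B + C ⊆ D)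
    (hneg : ∀ B ∈ 𝓑, ∃ C ∈ 𝓑, -B ⊆ C) : IsCoarseStructure (groupCoarseOf 𝓑) := by
  refine ⟨fun η hη => hη.1.refl, ?_, ?_, ?_⟩
  · rintro η ⟨hη, B, hB, hηB⟩ θ ⟨hθ, C, hC, hθC⟩
    obtain ⟨D, hD, hBCD⟩ := hadd B hB C hC
    refine ⟨⟨fun a => ⟨a, hη.refl a, hθ.refl a⟩⟩, D, hD, ?_⟩
    rintro ⟨a, c⟩ ⟨b, hab, hbc⟩
    simpa using hBCD (Set.add_mem_add (hηB hab) (hθC hbc))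
  · rintro η ⟨hη, B, hB, hηB⟩
    obtain ⟨C, hC, hBC⟩ := hneg B hB
    refine ⟨⟨fun a => hη.refl a⟩, C, hC, ?_⟩
    rintro ⟨a, b⟩ hab
    simpa using hBC (Set.neg_mem_neg.mpr (hηB hab))
  · rintro η ⟨hη, B, hB, hηB⟩ η' hη'η hη'
    exact ⟨⟨hη'⟩, B, hB, hη'η.trans hηB⟩

theorem isAddCoarseGroup_groupCoarseOf (hadd : ∀ B ∈ 𝓑, ∀ C ∈ 𝓑, ∃ D ∈ 𝓑, B + C ⊆ D)
    (hneg : ∀ B ∈ 𝓑, ∃ C ∈ 𝓑, -B ⊆ C) : IsAddCoarseGroup (groupCoarseOf 𝓑) := by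
  constructor
  · rintro η ⟨-, ε, ⟨hε, B, hB, hεB⟩, δ, ⟨hδ, C, hC, hδC⟩, hη⟩
    obtain ⟨D, hD, hBCD⟩ := hadd B hB C hC
    refine ⟨subEntourage D, subEntourage_mem_groupCoarseOf hD (hBCD ?_), fun q hq => hBCD ?_⟩
    · simpa using Set.add_mem_add (zero_mem_of_subset_subEntourage hεB)
        (zero_mem_of_subset_subEntourage hδC)
    · rw [add_sub_add_comm]
      exact Set.add_mem_add (hεB (hη hq).1) (hδC (hη hq).2)
  · rintro η ⟨hη, B, hB, hηB⟩
    obtain ⟨C, hC, hBC⟩ := hneg B hB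
    refine ⟨subEntourage C, subEntourage_mem_groupCoarseOf hC (hBC ?_), fun q hq => hBC ?_⟩
    · simpa using Set.neg_mem_neg.mpr (zero_mem_of_subset_subEntourage hηB)
    · rw [neg_sub_neg, ← neg_sub]
      exact Set.neg_mem_neg.mpr (hηB hq)

end GroupCoarse

section FreeAbelian

variable {X : Type*} {p : ℕ} {E : Set (SetRel X X)} {ε δ : SetRel X X}

theorem Yset_mono (h : ε ⊆ δ) : Yset p ε ⊆ Yset p δ :=
  fun _ ⟨q, hq, ha⟩ => ⟨q, h hq, ha⟩

theorem neg_Yset : -Yset p ε = Yset p ε.inv := by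
  ext a
  constructor
  · rintro ⟨q, hq, ha⟩
    exact ⟨q.swap, hq, by rw [Prod.fst_swap, Prod.snd_swap, ← neg_sub, ← ha, neg_neg]⟩
  · rintro ⟨q, hq, rfl⟩
    exact ⟨q.swap, hq, by simp⟩

theorem zero_mem_Yset [ε.IsRefl] (x : X) : (0 : X →₀ ZMod p) ∈ Yset p ε :=
  ⟨(x, x), ε.rfl, (sub_self _).symm⟩

/-- The sets `Y_{n,ε}` of sums of at most `n` elements of `Y_ε`; the `0` makes "at most" work
also when `X` is empty. -/
def freeAbelianBase (p : ℕ) (E : Set (SetRel X X)) : Set (Set (X →₀ ZMod p)) :=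
  {B | ∃ ε ∈ E, ∃ n, B = nSumset (insert 0 (Yset p ε)) n}

theorem freeAbelianBase_add (hE : IsCoarseStructure E) :
    ∀ B ∈ freeAbelianBase p E, ∀ C ∈ freeAbelianBase p E,
      ∃ D ∈ freeAbelianBase p E, B + C ⊆ D := by
  rintro _ ⟨ε, hε, n, rfl⟩ _ ⟨δ, hδ, m, rfl⟩
  refine ⟨_, ⟨ε ∪ δ, hE.union_mem hε hδ, n + m, rfl⟩, ?_⟩
  refine (Set.add_subset_add (nSumset_mono ?_) (nSumset_mono ?_)).trans nSumset_add_subset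
  · exact Set.insert_subset_insert (Yset_mono Set.subset_union_left)
  · exact Set.insert_subset_insert (Yset_mono Set.subset_union_right)

theorem freeAbelianBase_neg (hE : IsCoarseStructure E) :
    ∀ B ∈ freeAbelianBase p E, ∃ C ∈ freeAbelianBase p E, -B ⊆ C := by
  rintro _ ⟨ε, hε, n, rfl⟩
  refine ⟨_, ⟨ε.inv, hE.inv_mem hε, n, rfl⟩, neg_nSumset_subset.trans_eq ?_⟩
  rw [Set.neg_insert, neg_zero, neg_Yset]

theorem mem_iterate_of_single_sub_single_mem_nSumset [Nontrivial (ZMod p)] [ε.IsRefl] {n : ℕ}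
    {x y : X} (h : Finsupp.single x 1 - Finsupp.single y 1 ∈ nSumset (Yset p ε) n) :
    (x, y) ∈ ((ε ∪ ε.inv) ○ ·)^[n] SetRel.id := by
  obtain ⟨f, hf, hsum⟩ := h
  choose e he hfe using hf
  let G := SimpleGraph.fromEdgeSet (Set.range fun i => s((e i).1, (e i).2))
  have hGε : ∀ ⦃a b⦄, G.Adj a b → (a, b) ∈ ε ∪ ε.inv := by
    rintro a b ⟨⟨i, hi⟩, -⟩
    rcases Sym2.eq_iff.mp hi with ⟨rfl, rfl⟩ | ⟨rfl, rfl⟩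
    · exact Or.inl (he i)
    · exact Or.inr (he i)
  have hreach : G.Reachable x y := by
    refine SimpleGraph.ConnectedComponent.eq.mp
      (Finsupp.apply_eq_of_single_sub_single_eq_sum one_ne_zero _ e (fun i => ?_)
        (hsum.trans (Finset.sum_congr rfl fun i _ => hfe i)))
    refine SimpleGraph.ConnectedComponent.eq.mpr ?_
    by_cases hi : (e i).1 = (e i).2
    · rw [hi]
    · exact SimpleGraph.Adj.reachable ⟨⟨i, rfl⟩, hi⟩
  obtain ⟨w, hw⟩ := hreach.exists_path_of_dist
  have hlen : w.length ≤ n :=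
    (hw.1.isTrail.length_le_of_edgeSet_subset_range (ι := Fin n)
      (SimpleGraph.edgeSet_fromEdgeSet _ ▸ Set.sdiff_subset)).trans_eq (Fintype.card_fin n)
  have : (ε ∪ ε.inv).IsRefl := SetRel.isRefl_mono Set.subset_union_left
  exact (ε ∪ ε.inv).monotone_iterate_comp_id hlen (w.mem_iterate_comp hGε)

end FreeAbelian

section Subspace

variable {X : Type*} {p : ℕ} [Nontrivial (ZMod p)] {E : Set (SetRel X X)}

local notation "ι" => fun x : X => Finsupp.single x (1 : ZMod p)

theorem preimage_single_mem_of_mem_groupCoarseOf (hE : IsCoarseStructure E)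
    {η : SetRel (X →₀ ZMod p) (X →₀ ZMod p)} (hη : η ∈ groupCoarseOf (freeAbelianBase p E)) :
    Prod.map ι ι ⁻¹' η ∈ E := by
  obtain ⟨hη, _, ⟨ε, hε, n, rfl⟩, hηB⟩ := hη
  have := hE.isRefl hε
  refine hE.of_subset (hE.iterate_comp_id_mem (hE.union_mem hε (hE.inv_mem hε)) n) ?_
  rintro ⟨x, y⟩ hxy
  refine mem_iterate_of_single_sub_single_mem_nSumset (p := p) ?_
  simpa [Set.insert_eq_of_mem (zero_mem_Yset x)] using hηB hxy

theorem exists_preimage_single_eq_of_mem (hE : IsCoarseStructure E) {ε : SetRel X X}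
    (hε : ε ∈ E) : ∃ η ∈ groupCoarseOf (freeAbelianBase p E), ε = Prod.map ι ι ⁻¹' η := by
  have := hE.isRefl hε
  have hι : Function.Injective ι := Finsupp.single_left_injective one_ne_zero
  refine ⟨SetRel.id ∪ Prod.map ι ι '' ε, ⟨⟨fun a => Or.inl rfl⟩, _, ⟨ε, hε, 1, rfl⟩, ?_⟩, ?_⟩
  · rintro q (hq | ⟨⟨x, y⟩, hxy, rfl⟩)
    · simpa [SetRel.mem_id.mp hq] using mem_nSumset_one (Set.mem_insert _ _)
    · exact mem_nSumset_one (Set.mem_insert_of_mem _ ⟨(x, y), hxy, rfl⟩)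
  · rw [Set.preimage_union, Set.preimage_image_eq _ (hι.prodMap hι)]
    refine (Set.union_eq_right.mpr ?_).symm
    rintro ⟨x, y⟩ (h : ι x = ι y)
    rw [hι h]
    exact ε.rfl

end Subspace

theorem exists_group_coarse_structure_on_freeAbelian_general {X : Type*} (p : ℕ)
    [Fact p.Prime] (E : Set (Set (X × X)))
    (hE : IsCoarseStructure E) :
    ∃ E' : Set (Set ((X →₀ ZMod p) × (X →₀ ZMod p))),
      IsCoarseStructure E' ∧ IsAddCoarseGroup E' ∧
      {s : Set (X × X) | ∃ ε' ∈ E', s =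
        {q : X × X | (Finsupp.single q.1 (1 : ZMod p),
          Finsupp.single q.2 (1 : ZMod p)) ∈ ε'}} = E := by
  refine ⟨groupCoarseOf (freeAbelianBase p E),
    isCoarseStructure_groupCoarseOf (freeAbelianBase_add hE) (freeAbelianBase_neg hE),
    isAddCoarseGroup_groupCoarseOf (freeAbelianBase_add hE) (freeAbelianBase_neg hE), ?_⟩
  ext ε
  constructor
  · rintro ⟨η, hη, rfl⟩
    exact preimage_single_mem_of_mem_groupCoarseOf hE hη
  · exact exists_preimage_single_eq_of_mem hE

/-- For a connected coarse space `(X, E)` and a prime `p`, there is a group coarse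
structure `E'` on the free abelian group `A(X)` of exponent `p` on `X` whose subspace
structure on `X` (embedded as the standard generators) equals `E`. -/
theorem exists_group_coarse_structure_on_freeAbelian {X : Type*} (p : ℕ)
    [Fact p.Prime] (E : Set (Set (X × X)))
    (hE : IsCoarseStructure E) (hconn : IsConnectedCoarse E) :
    ∃ E' : Set (Set ((X →₀ ZMod p) × (X →₀ ZMod p))),
      IsCoarseStructure E' ∧ IsAddCoarseGroup E' ∧
      {s : Set (X × X) | ∃ ε' ∈ E', s =
        {q : X × X | (Finsupp.single q.1 (1 : ZMod p),
          Finsupp.single q.2 (1 : ZMod p)) ∈ ε'}} = E :=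
  exists_group_coarse_structure_on_freeAbelian_general p E hE
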